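/- Let A be a ∗-ring with h⁻(A) = 0. Let μ₁,…,μₙ ∈ A be self-dual elements and λ₁,…,λ_m ∈ A be such that μ₁,…,μₙ, λ₁, λ₁∗,…,λ_m, λ_m∗ is an A-regular sequence. Then the following are equivalent: (1) the sequence [μ₁],…,[μₙ], [λ₁λ₁∗],…,[λ_mλ_m∗] is a regular sequence in h⁺(A); (2) h⁻(A/(μ₁,…,μ_k)) = 0 for all 1 ≤ k ≤ n and h⁻(A/(μ₁,…,μₙ, λ₁, λ₁∗,…,λ_j, λ_j∗)) = 0 for all 1 ≤ j ≤ m. If these equivalent conditions hold, then h⁺(A/(μ₁,…,μₙ, λ₁, λ₁∗,…,λ_m, λ_m∗)) ≅ h⁺(A)/([μ₁],…,[μₙ],[λ₁λ₁∗],…,[λ_mλ_m∗]) and h⁻ of this quotient ring vanishes. -/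

import Mathlib

/-- A sequence (given as a list) `a₁, …, aₙ` in a commutative ring `A` is `A`-regular if for
each `i`, `aᵢ` is not a zero divisor on `A ⧸ (a₁, …, a_{i-1})`. -/
def IsRegularSeq {A : Type*} [CommRing A] (l : List A) : Prop :=
  ∀ (i : ℕ) (h : i < l.length), ∀ x : A,
    l.get ⟨i, h⟩ * x ∈ Ideal.span {y | y ∈ l.take i} →
      x ∈ Ideal.span {y | y ∈ l.take i}

/-- For a list `s` of (self-dual) elements of a ∗-ring `A`, `hSpanMem s y` says that the
class `[y]` of a self-dual element `y` lies in the ideal of `h⁺(A)` generated by the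
classes of the entries of `s`: `y = Σ cᵢ·sᵢ + (t + t∗)` with all `cᵢ` self-dual. -/
def hSpanMem {A : Type*} [CommRing A] [StarRing A] (s : List A) (y : A) : Prop :=
  ∃ c : Fin s.length → A, (∀ i, star (c i) = c i) ∧
    ∃ t : A, y = (∑ i, c i * s.get i) + (t + star t)

/-- `IsHPlusRegularSeq s` says that the classes in `h⁺(A)` of the (self-dual) entries of
`s` form a regular sequence in the ring `h⁺(A)`: for each `i`, `[sᵢ]` is not a zero
divisor on `h⁺(A) ⧸ ([s₁], …, [s_{i-1}])`. -/
def IsHPlusRegularSeq {A : Type*} [CommRing A] [StarRing A] (s : List A) : Prop :=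
  ∀ (i : ℕ) (h : i < s.length), ∀ y : A, star y = y →
    hSpanMem (s.take i) (y * s.get ⟨i, h⟩) → hSpanMem (s.take i) y

/-- `HMinusModZero I` says that `h⁻(A/I) = 0` (for a ∗-closed ideal `I`): every element of
`A/I` killed by `id + ∗` is in the image of `id − ∗`. -/
def HMinusModZero {A : Type*} [CommRing A] [StarRing A] (I : Ideal A) : Prop :=
  ∀ a : A, star a + a ∈ I → ∃ b : A, a - (b - star b) ∈ I

/-!
Adjoin the generators one at a time, either a self-dual `μ` or a pair `λ, λ∗`, keeping track of
the invariant that `h⁻(A/I) = 0` and `h⁺(A)/([s]) ≅ h⁺(A/I)`. This is the hexagon of Tate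
cohomology for `0 → A/I → A/I → A/(I, μ) → 0` (multiplication by `μ`), and its analogue for
`λ, λ∗`, where the Koszul complex of the regular pair replaces the short exact sequence. Given
the invariant for `I`, `h⁺(A/I)` maps onto `h⁺` of the next quotient with kernel generated by
the new class `[μ]` (resp. `[λλ∗]`), and `h⁻` of the next quotient vanishes exactly when that
class is a nonzerodivisor on `h⁺(A/I) = h⁺(A)/([s])`. Induction along the sequence then gives
both the equivalence and the description of `h⁺` of the final quotient.
-/

section Ring

variable {A : Type*} [CommRing A] {I : Ideal A}

def IsRegularMod (I : Ideal A) (a : A) : Prop := ∀ x, a * x ∈ I → x ∈ I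

theorem Ideal.mem_sup_span_singleton {a x : A} :
    x ∈ I ⊔ Ideal.span {a} ↔ ∃ c, x - c * a ∈ I := by
  rw [sup_comm, Ideal.mem_span_singleton_sup]
  refine ⟨fun ⟨c, b, hb, hx⟩ => ⟨c, by rwa [← hx, add_sub_cancel_left]⟩,
    fun ⟨c, hc⟩ => ⟨c, _, hc, add_sub_cancel _ _⟩⟩

theorem Ideal.mem_sup_span_pair {a b x : A} :
    x ∈ I ⊔ Ideal.span {a, b} ↔ ∃ c d, x - c * a - d * b ∈ I := by
  rw [Ideal.span_insert, ← sup_assoc, Ideal.mem_sup_span_singleton]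
  simp only [Ideal.mem_sup_span_singleton]
  constructor <;> rintro ⟨c, d, h⟩ <;> exact ⟨d, c, by rwa [sub_right_comm]⟩

theorem Ideal.span_setOf_mem_append (L L' : List A) :
    Ideal.span {y | y ∈ L ++ L'} = Ideal.span {y | y ∈ L} ⊔ Ideal.span {y | y ∈ L'} := by
  simp only [List.mem_append, Set.ofPred_or, Ideal.span_union]

/-- Exactness of the Koszul complex of a regular pair in degree one. -/
theorem IsRegularMod.exists_of_mul_add_mul_mem {l l' p q : A} (hl : IsRegularMod I l)
    (hl' : IsRegularMod (I ⊔ Ideal.span {l}) l') (h : p * l + q * l' ∈ I) :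
    ∃ e, q - e * l ∈ I ∧ p + e * l' ∈ I := by
  obtain ⟨e, he⟩ := Ideal.mem_sup_span_singleton.mp
    (hl' q (Ideal.mem_sup_span_singleton.mpr ⟨-p, by convert h using 1; ring⟩))
  exact ⟨e, he, hl _ (by convert sub_mem h (I.mul_mem_right l' he) using 1; ring)⟩

end Ring

section Star

variable {A : Type*} [CommRing A] [StarRing A] {I : Ideal A} {s : List A}

theorem hSpanMem_nil_add_star (t : A) : hSpanMem [] (t + star t) :=
  ⟨Fin.elim0, fun i => i.elim0, t, by simp⟩

theorem hSpanMem.append_singleton {y x : A} (hy : hSpanMem s y) (hx : star x = x) (h : A) :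
    hSpanMem (s ++ [h]) (y + x * h) := by
  obtain ⟨c, hc, t, rfl⟩ := hy
  have hlen : (s ++ [h]).length = s.length + 1 := by simp
  refine ⟨fun i => Fin.lastCases x c (i.cast hlen), fun i => ?_, t, ?_⟩
  · rcases Fin.eq_castSucc_or_eq_last (i.cast hlen) with ⟨j, hj⟩ | hj <;> simp [hj, hx, hc]
  · rw [← (finCongr hlen).symm.sum_comp, Fin.sum_univ_castSucc]
    simp only [List.get_eq_getElem, finCongr_symm, finCongr_apply, Fin.cast_cast,
      Fin.cast_eq_self, Fin.lastCases_castSucc, Fin.val_cast, Fin.val_castSucc, Fin.is_lt,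
      List.getElem_append_left, Fin.lastCases_last, Fin.val_last, Std.le_refl,
      List.getElem_append_right, tsub_self, List.getElem_cons_zero]
    ring

theorem hSpanMem.exists_sub_mem {y : A} (hy : hSpanMem s y) (hs : ∀ z ∈ s, z ∈ I) :
    ∃ t, y - (t + star t) ∈ I := by
  obtain ⟨c, -, t, rfl⟩ := hy
  exact ⟨t, by simpa using I.sum_mem fun i _ => I.mul_mem_left (c i) (hs _ (s.get_mem i))⟩

end Star

section Invariants

variable {A : Type*} [CommRing A] [StarRing A] {I : Ideal A} {s : List A}

def IsStarClosed (I : Ideal A) : Prop := ∀ x ∈ I, star x ∈ I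

def SelfDualLifts (I : Ideal A) : Prop :=
  ∀ a : A, star a - a ∈ I → ∃ x, star x = x ∧ a - x ∈ I

def KerHPlusLE (s : List A) (I : Ideal A) : Prop :=
  ∀ y : A, star y = y → (∃ b, y - (b + star b) ∈ I) → hSpanMem s y

def HPlusRegularMod (s : List A) (h : A) : Prop :=
  ∀ y : A, star y = y → hSpanMem s (y * h) → hSpanMem s y

/-- `h⁻(A/I) = 0`, and `h⁺(A)/([s]) → h⁺(A/I)` is onto (`lifts`) and one-to-one (`ker`). -/
structure PresentsHPlus (s : List A) (I : Ideal A) : Prop where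
  hMinus : HMinusModZero I
  lifts : SelfDualLifts I
  ker : KerHPlusLE s I

section SelfDual

variable {μ : A}

theorem selfDualLifts_sup_span_singleton (hI : IsStarClosed I) (hHM : HMinusModZero I)
    (hlift : SelfDualLifts I) (hμ : star μ = μ) (hreg : IsRegularMod I μ) :
    SelfDualLifts (I ⊔ Ideal.span {μ}) := by
  intro a ha
  obtain ⟨c, hc⟩ := Ideal.mem_sup_span_singleton.mp ha
  have hc' := hI _ hc
  simp only [star_sub, star_mul, star_star, hμ] at hc'
  obtain ⟨d, hd⟩ := hHM c (hreg _ (by convert neg_mem (add_mem hc hc') using 1; ring))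
  obtain ⟨x, hx, hax⟩ := hlift (a + d * μ) (by
    convert add_mem hc (I.mul_mem_right μ hd) using 1
    simp only [star_add, star_mul, hμ]
    ring)
  exact ⟨x, hx, Ideal.mem_sup_span_singleton.mpr ⟨-d, by convert hax using 1; ring⟩⟩

theorem kerHPlusLE_sup_span_singleton (hI : IsStarClosed I) (hlift : SelfDualLifts I)
    (hker : KerHPlusLE s I) (hμ : star μ = μ) (hreg : IsRegularMod I μ) :
    KerHPlusLE (s ++ [μ]) (I ⊔ Ideal.span {μ}) := by
  rintro y hy ⟨b, hb⟩
  obtain ⟨c, hc⟩ := Ideal.mem_sup_span_singleton.mp hb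
  have hc' := hI _ hc
  simp only [star_sub, star_add, star_mul, star_star, hμ, hy] at hc'
  obtain ⟨x, hx, hcx⟩ := hlift c (hreg _ (by convert sub_mem hc hc' using 1; ring))
  have hyx : star (y - x * μ) = y - x * μ := by simp only [star_sub, star_mul, hμ, hx, hy]; ring
  have hker' : hSpanMem s (y - x * μ) :=
    hker _ hyx ⟨b, by convert add_mem hc (I.mul_mem_right μ hcx) using 1; ring⟩
  simpa using hker'.append_singleton hx μ

theorem hMinusModZero_sup_span_singleton (hI : IsStarClosed I) (hs : ∀ z ∈ s, z ∈ I)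
    (hP : PresentsHPlus s I) (hμ : star μ = μ) (hreg : IsRegularMod I μ)
    (hμs : HPlusRegularMod s μ) : HMinusModZero (I ⊔ Ideal.span {μ}) := by
  intro a ha
  obtain ⟨c, hc⟩ := Ideal.mem_sup_span_singleton.mp ha
  have hc' := hI _ hc
  simp only [star_sub, star_add, star_mul, star_star, hμ] at hc'
  obtain ⟨x, hx, hcx⟩ := hP.lifts c (hreg _ (by convert sub_mem hc hc' using 1; ring))
  have hxμ : star (x * μ) = x * μ := by rw [star_mul, hμ, hx, mul_comm]
  have hx' : hSpanMem s x := hμs x hx (hP.ker _ hxμ ⟨a, by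
    convert neg_mem (add_mem hc (I.mul_mem_right μ hcx)) using 1; ring⟩)
  obtain ⟨t, ht⟩ := hx'.exists_sub_mem hs
  obtain ⟨b, hb⟩ := hP.hMinus (a - t * μ) (by
    convert add_mem (add_mem hc (I.mul_mem_right μ hcx)) (I.mul_mem_right μ ht) using 1
    simp only [star_sub, star_mul, hμ]
    ring)
  exact ⟨b, Ideal.mem_sup_span_singleton.mpr ⟨t, by convert hb using 1; ring⟩⟩

theorem hPlusRegularMod_of_hMinusModZero_sup_span_singleton (hI : IsStarClosed I)
    (hs : ∀ z ∈ s, z ∈ I)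
    (hker : KerHPlusLE s I) (hμ : star μ = μ) (hreg : IsRegularMod I μ)
    (hHM : HMinusModZero (I ⊔ Ideal.span {μ})) : HPlusRegularMod s μ := by
  intro y hy (hyμ : hSpanMem s (y * μ))
  obtain ⟨t, ht⟩ := hyμ.exists_sub_mem hs
  obtain ⟨b, hb⟩ := hHM t
    (Ideal.mem_sup_span_singleton.mpr ⟨y, by convert neg_mem ht using 1; ring⟩)
  obtain ⟨c, hc⟩ := Ideal.mem_sup_span_singleton.mp hb
  have hc' := hI _ hc
  simp only [star_sub, star_mul, star_star, hμ] at hc'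
  exact hker y hy ⟨c, hreg _ (by convert add_mem (add_mem ht hc) hc' using 1; ring)⟩

end SelfDual

end Invariants

section Pair

variable {A : Type*} [CommRing A] [StarRing A] {I : Ideal A} {s : List A} {l : A}

theorem IsRegularMod.exists_of_mul_add_mul_star_mem {p ε : A} (hI : IsStarClosed I)
    (hl : IsRegularMod I l) (hl' : IsRegularMod (I ⊔ Ideal.span {l}) (star l))
    (h : p * l + ε * star p * star l ∈ I) :
    ∃ e, ε * star p - e * l ∈ I ∧ e + ε * star e ∈ I := by
  obtain ⟨e, hq, hp⟩ := hl.exists_of_mul_add_mul_mem hl' h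
  have hp' := hI _ hp
  simp only [star_add, star_mul, star_star] at hp'
  exact ⟨e, hq, hl _ (by convert sub_mem (I.mul_mem_left ε hp') hq using 1; ring)⟩

theorem selfDualLifts_sup_span_pair (hI : IsStarClosed I) (hHM : HMinusModZero I)
    (hlift : SelfDualLifts I) (hl : IsRegularMod I l)
    (hl' : IsRegularMod (I ⊔ Ideal.span {l}) (star l)) :
    SelfDualLifts (I ⊔ Ideal.span {l, star l}) := by
  intro a ha
  obtain ⟨c, d, hcd⟩ := Ideal.mem_sup_span_pair.mp ha
  have hcd' := hI _ hcd
  simp only [star_sub, star_mul, star_star] at hcd'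
  obtain ⟨e, he, hee⟩ := hl.exists_of_mul_add_mul_star_mem (p := c + star d) (ε := 1) hI hl'
    (by convert neg_mem (add_mem hcd hcd') using 1; simp only [star_add, star_star]; ring)
  obtain ⟨f, hf⟩ := hHM e (by simpa [add_comm] using hee)
  obtain ⟨x, hx, hax⟩ := hlift (a + c * l + f * (l * star l)) (by
    convert add_mem (add_mem hcd (I.mul_mem_right (star l) he))
      (I.mul_mem_right (l * star l) hf) using 1
    simp only [star_add, star_mul, star_star]
    ring)
  exact ⟨x, hx, Ideal.mem_sup_span_pair.mpr ⟨-c, -(f * l), by convert hax using 1; ring⟩⟩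

theorem kerHPlusLE_sup_span_pair (hI : IsStarClosed I) (hlift : SelfDualLifts I)
    (hker : KerHPlusLE s I) (hl : IsRegularMod I l)
    (hl' : IsRegularMod (I ⊔ Ideal.span {l}) (star l)) :
    KerHPlusLE (s ++ [l * star l]) (I ⊔ Ideal.span {l, star l}) := by
  rintro y hy ⟨b, hb⟩
  obtain ⟨c, d, hcd⟩ := Ideal.mem_sup_span_pair.mp hb
  have hcd' := hI _ hcd
  simp only [star_sub, star_add, star_mul, star_star, hy] at hcd'
  obtain ⟨e, he, hee⟩ := hl.exists_of_mul_add_mul_star_mem (p := c - star d) (ε := -1) hI hl'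
    (by convert sub_mem hcd' hcd using 1; simp only [star_sub, star_star]; ring)
  obtain ⟨x, hx, hex⟩ := hlift e (by convert neg_mem hee using 1; ring)
  have hyx : star (y - x * (l * star l)) = y - x * (l * star l) := by
    simp only [star_sub, star_mul, star_star, hx, hy]
    ring
  have hker' : hSpanMem s (y - x * (l * star l)) := hker _ hyx ⟨b + c * l, by
    convert add_mem (add_mem hcd (I.mul_mem_right (star l) he))
      (I.mul_mem_right (l * star l) hex) using 1
    simp only [star_add, star_sub, star_mul, star_star]
    ring⟩
  simpa using hker'.append_singleton hx (l * star l)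

theorem hMinusModZero_sup_span_pair (hI : IsStarClosed I) (hs : ∀ z ∈ s, z ∈ I)
    (hP : PresentsHPlus s I) (hl : IsRegularMod I l)
    (hl' : IsRegularMod (I ⊔ Ideal.span {l}) (star l)) (hls : HPlusRegularMod s (l * star l)) :
    HMinusModZero (I ⊔ Ideal.span {l, star l}) := by
  intro a ha
  obtain ⟨c, d, hcd⟩ := Ideal.mem_sup_span_pair.mp ha
  have hcd' := hI _ hcd
  simp only [star_sub, star_add, star_mul, star_star] at hcd'
  obtain ⟨e, he, hee⟩ := hl.exists_of_mul_add_mul_star_mem (p := c - star d) (ε := -1) hI hl'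
    (by convert sub_mem hcd' hcd using 1; simp only [star_sub, star_star]; ring)
  obtain ⟨x, hx, hex⟩ := hP.lifts e (by convert neg_mem hee using 1; ring)
  have hxl : star (x * (l * star l)) = x * (l * star l) := by
    simp only [star_mul, star_star, hx]
    ring
  have hx' : hSpanMem s x := hls x hx (hP.ker _ hxl ⟨a - c * l, by
    convert neg_mem (add_mem (add_mem hcd (I.mul_mem_right (star l) he))
      (I.mul_mem_right (l * star l) hex)) using 1
    simp only [star_sub, star_mul, star_star]
    ring⟩)
  obtain ⟨u, hu⟩ := hx'.exists_sub_mem hs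
  obtain ⟨b, hb⟩ := hP.hMinus (a - c * l - u * (l * star l)) (by
    convert add_mem (add_mem (add_mem hcd (I.mul_mem_right (star l) he))
      (I.mul_mem_right (l * star l) hex)) (I.mul_mem_right (l * star l) hu) using 1
    simp only [star_sub, star_mul, star_star]
    ring)
  exact ⟨b, Ideal.mem_sup_span_pair.mpr ⟨c + u * star l, 0, by convert hb using 1; ring⟩⟩

theorem hPlusRegularMod_of_hMinusModZero_sup_span_pair (hI : IsStarClosed I)
    (hs : ∀ z ∈ s, z ∈ I)
    (hker : KerHPlusLE s I) (hl : IsRegularMod I l)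
    (hl' : IsRegularMod (I ⊔ Ideal.span {l}) (star l))
    (hHM : HMinusModZero (I ⊔ Ideal.span {l, star l})) : HPlusRegularMod s (l * star l) := by
  intro y hy (hyl : hSpanMem s (y * (l * star l)))
  obtain ⟨t, ht⟩ := hyl.exists_sub_mem hs
  obtain ⟨b, hb⟩ := hHM t
    (Ideal.mem_sup_span_pair.mpr ⟨0, y * l, by convert neg_mem ht using 1; ring⟩)
  obtain ⟨c, d, hcd⟩ := Ideal.mem_sup_span_pair.mp hb
  have hcd' := hI _ hcd
  simp only [star_sub, star_mul, star_star] at hcd'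
  obtain ⟨e, hq, hp⟩ := hl.exists_of_mul_add_mul_mem hl'
    (p := c + star d - y * star l) (q := d + star c)
    (by convert neg_mem (add_mem (add_mem ht hcd) hcd') using 1; ring)
  have hp' := hI _ hp
  simp only [star_add, star_sub, star_mul, star_star, hy] at hp'
  exact hker y hy ⟨e, hl _ (by convert neg_mem (sub_mem hp' hq) using 1; ring)⟩

end Pair

section Bundles

variable {A : Type*} [CommRing A] [StarRing A] {I : Ideal A} {s : List A}

theorem PresentsHPlus.sup_span_singleton {μ : A} (hI : IsStarClosed I) (hs : ∀ z ∈ s, z ∈ I)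
    (hP : PresentsHPlus s I) (hμ : star μ = μ) (hreg : IsRegularMod I μ) :
    (HMinusModZero (I ⊔ Ideal.span {μ}) ↔ HPlusRegularMod s μ) ∧
      (HMinusModZero (I ⊔ Ideal.span {μ}) →
        PresentsHPlus (s ++ [μ]) (I ⊔ Ideal.span {μ})) :=
  ⟨⟨hPlusRegularMod_of_hMinusModZero_sup_span_singleton hI hs hP.ker hμ hreg,
      hMinusModZero_sup_span_singleton hI hs hP hμ hreg⟩,
    fun hHM => ⟨hHM, selfDualLifts_sup_span_singleton hI hP.hMinus hP.lifts hμ hreg,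
      kerHPlusLE_sup_span_singleton hI hP.lifts hP.ker hμ hreg⟩⟩

theorem PresentsHPlus.sup_span_pair {l : A} (hI : IsStarClosed I) (hs : ∀ z ∈ s, z ∈ I)
    (hP : PresentsHPlus s I) (hl : IsRegularMod I l)
    (hl' : IsRegularMod (I ⊔ Ideal.span {l}) (star l)) :
    (HMinusModZero (I ⊔ Ideal.span {l, star l}) ↔ HPlusRegularMod s (l * star l)) ∧
      (HMinusModZero (I ⊔ Ideal.span {l, star l}) →
        PresentsHPlus (s ++ [l * star l]) (I ⊔ Ideal.span {l, star l})) :=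
  ⟨⟨hPlusRegularMod_of_hMinusModZero_sup_span_pair hI hs hP.ker hl hl',
      hMinusModZero_sup_span_pair hI hs hP hl hl'⟩,
    fun hHM => ⟨hHM, selfDualLifts_sup_span_pair hI hP.hMinus hP.lifts hl hl',
      kerHPlusLE_sup_span_pair hI hP.lifts hP.ker hl hl'⟩⟩

end Bundles

theorem List.forall_take_get_append_singleton_iff {α : Type*} (P : List α → α → Prop)
    (L : List α) (a : α) :
    (∀ (i : ℕ) (h : i < (L ++ [a]).length),
        P ((L ++ [a]).take i) ((L ++ [a]).get ⟨i, h⟩)) ↔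
      (∀ (i : ℕ) (h : i < L.length), P (L.take i) (L.get ⟨i, h⟩)) ∧ P L a := by
  constructor
  · intro h
    refine ⟨fun i hi => ?_, by simpa using h L.length (by simp)⟩
    simpa [List.take_append_of_le_length hi.le, List.getElem_append_left hi] using
      h i (by simp; omega)
  · rintro ⟨hL, ha⟩ i hi
    rcases (show i < L.length ∨ i = L.length by simp at hi; omega) with hi' | rfl
    · simpa [List.take_append_of_le_length hi'.le, List.getElem_append_left hi'] using hL i hi'
    · simpa using ha

section Sequences

variable {A : Type*} [CommRing A]

theorem isRegularSeq_append_singleton_iff (L : List A) (a : A) :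
    IsRegularSeq (L ++ [a]) ↔ IsRegularSeq L ∧ IsRegularMod (Ideal.span {y | y ∈ L}) a :=
  List.forall_take_get_append_singleton_iff
    (fun L a => IsRegularMod (Ideal.span {y | y ∈ L}) a) L a

theorem isHPlusRegularSeq_append_singleton_iff [StarRing A] (s : List A) (h : A) :
    IsHPlusRegularSeq (s ++ [h]) ↔ IsHPlusRegularSeq s ∧ HPlusRegularMod s h :=
  List.forall_take_get_append_singleton_iff (fun s h => HPlusRegularMod s h) s h

theorem IsRegularSeq.of_append {L L' : List A} (h : IsRegularSeq (L ++ L')) :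
    IsRegularSeq L := by
  induction L' using List.reverseRecOn with
  | nil => simpa using h
  | append_singleton L' a ih =>
    rw [← List.append_assoc, isRegularSeq_append_singleton_iff] at h
    exact ih h.1

end Sequences

section Steps

variable {A : Type*} [CommRing A] [StarRing A]

theorem isStarClosed_span {S : Set A} (hS : ∀ x ∈ S, star x ∈ S) :
    IsStarClosed (Ideal.span S) := by
  intro x hx
  induction hx using Submodule.span_induction with
  | mem y hy => exact Ideal.subset_span (hS y hy)
  | zero => simp
  | add y z _ _ hy hz => simpa using add_mem hy hz
  | smul c y _ hy => simpa [mul_comm] using Ideal.mul_mem_left _ (star c) hy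

/-- `inl μ` adjoins a self-dual `μ`, of class `[μ]`; `inr λ` adjoins `λ, λ∗`, of class
`[λλ∗]`. -/
def stepGens : A ⊕ A → List A := Sum.elim (fun μ => [μ]) fun l => [l, star l]

def stepClass : A ⊕ A → A := Sum.elim id fun l => l * star l

def seqIdeal (T : List (A ⊕ A)) : Ideal A := Ideal.span {y | y ∈ T.flatMap stepGens}

def HMinusOnPrefixes (T : List (A ⊕ A)) : Prop :=
  ∀ T', T' <+: T → HMinusModZero (seqIdeal T')

variable {T : List (A ⊕ A)}

theorem seqIdeal_append_singleton (st : A ⊕ A) :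
    seqIdeal (T ++ [st]) = seqIdeal T ⊔ Ideal.span {y | y ∈ stepGens st} := by
  rw [seqIdeal, seqIdeal, List.flatMap_append, List.flatMap_singleton,
    Ideal.span_setOf_mem_append]

theorem isStarClosed_seqIdeal (hT : ∀ μ, Sum.inl μ ∈ T → star μ = μ) :
    IsStarClosed (seqIdeal T) := by
  refine isStarClosed_span fun y hy => ?_
  simp only [Set.mem_ofPred_eq, List.mem_flatMap] at hy ⊢
  obtain ⟨st | l, hst, hy⟩ := hy
  · simp only [stepGens, Sum.elim_inl, List.mem_singleton] at hy
    exact ⟨_, hst, by simp [stepGens, hy, hT _ hst]⟩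
  · simp only [stepGens, Sum.elim_inr, List.mem_pair] at hy
    exact ⟨_, hst, by rcases hy with rfl | rfl <;> simp [stepGens]⟩

theorem mem_seqIdeal_of_mem_map_stepClass {z : A} (hz : z ∈ T.map stepClass) :
    z ∈ seqIdeal T := by
  obtain ⟨st | l, hst, rfl⟩ := List.mem_map.mp hz
  · exact Ideal.subset_span (List.mem_flatMap.mpr ⟨_, hst, by simp [stepGens, stepClass]⟩)
  · exact Ideal.mul_mem_left _ _
      (Ideal.subset_span (List.mem_flatMap.mpr ⟨_, hst, by simp [stepGens]⟩))

theorem hMinusOnPrefixes_append_singleton (st : A ⊕ A) :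
    HMinusOnPrefixes (T ++ [st]) ↔
      HMinusOnPrefixes T ∧ HMinusModZero (seqIdeal (T ++ [st])) := by
  simp only [HMinusOnPrefixes, List.prefix_concat_iff, or_imp, forall_and, forall_eq, and_comm]

theorem hMinusOnPrefixes_iff_forall_take :
    HMinusOnPrefixes T ↔ ∀ k ≤ T.length, HMinusModZero (seqIdeal (T.take k)) := by
  refine ⟨fun h k _ => h _ (List.take_prefix k T), fun h T' hT' => ?_⟩
  rw [List.prefix_iff_eq_take.mp hT']
  exact h _ hT'.length_le

theorem PresentsHPlus.append_step {st : A ⊕ A}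
    (hT : ∀ μ, Sum.inl μ ∈ T ++ [st] → star μ = μ)
    (hreg : IsRegularSeq ((T ++ [st]).flatMap stepGens))
    (hP : PresentsHPlus (T.map stepClass) (seqIdeal T)) :
    (HMinusModZero (seqIdeal (T ++ [st])) ↔ HPlusRegularMod (T.map stepClass) (stepClass st)) ∧
      (HMinusModZero (seqIdeal (T ++ [st])) →
        PresentsHPlus (T.map stepClass ++ [stepClass st]) (seqIdeal (T ++ [st]))) := by
  have hI := isStarClosed_seqIdeal fun μ hμ => hT μ (List.mem_append_left _ hμ)
  have hs : ∀ z ∈ T.map stepClass, z ∈ seqIdeal T := fun _ => mem_seqIdeal_of_mem_map_stepClass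
  rw [seqIdeal_append_singleton]
  rw [List.flatMap_append, List.flatMap_singleton] at hreg
  rcases st with μ | l
  · rw [show {y | y ∈ stepGens (Sum.inl μ)} = ({μ} : Set A) by ext; simp [stepGens]]
    exact hP.sup_span_singleton hI hs (hT μ (by simp))
      ((isRegularSeq_append_singleton_iff _ _).mp hreg).2
  · rw [show {y | y ∈ stepGens (Sum.inr l)} = ({l, star l} : Set A) by ext; simp [stepGens]]
    rw [show stepGens (Sum.inr l) = [l] ++ [star l] from rfl, ← List.append_assoc,
      isRegularSeq_append_singleton_iff, isRegularSeq_append_singleton_iff] at hreg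
    obtain ⟨⟨-, hl⟩, hl'⟩ := hreg
    simp only [Ideal.span_setOf_mem_append, List.mem_singleton, Set.ofPred_eq_eq_singleton] at hl'
    exact hP.sup_span_pair hI hs hl hl'

theorem presentsHPlus_nil (hA : HMinusModZero (⊥ : Ideal A)) :
    PresentsHPlus [] (⊥ : Ideal A) where
  hMinus := hA
  lifts a ha := ⟨a, sub_eq_zero.mp (Ideal.mem_bot.mp ha), by simp⟩
  ker y _ := fun ⟨b, hb⟩ => by
    rw [Ideal.mem_bot, sub_eq_zero] at hb
    exact hb ▸ hSpanMem_nil_add_star b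

theorem hMinusOnPrefixes_iff_and_presentsHPlus (hA : HMinusModZero (⊥ : Ideal A))
    (T : List (A ⊕ A)) (hT : ∀ μ, Sum.inl μ ∈ T → star μ = μ)
    (hreg : IsRegularSeq (T.flatMap stepGens)) :
    (HMinusOnPrefixes T ↔ IsHPlusRegularSeq (T.map stepClass)) ∧
      (HMinusOnPrefixes T → PresentsHPlus (T.map stepClass) (seqIdeal T)) := by
  induction T using List.reverseRecOn with
  | nil =>
    have hnil : seqIdeal ([] : List (A ⊕ A)) = ⊥ := by simp [seqIdeal]
    refine ⟨⟨fun _ i hi => by simp at hi, fun _ T' hT' => ?_⟩,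
      fun _ => hnil ▸ presentsHPlus_nil hA⟩
    rwa [List.prefix_nil.mp hT', hnil]
  | append_singleton T st ih =>
    obtain ⟨ihIff, ihP⟩ := ih (fun μ hμ => hT μ (List.mem_append_left _ hμ))
      (by rw [List.flatMap_append] at hreg; exact hreg.of_append)
    have hstep := fun h => PresentsHPlus.append_step hT hreg (ihP h)
    rw [hMinusOnPrefixes_append_singleton, List.map_append, List.map_singleton,
      isHPlusRegularSeq_append_singleton_iff, ← ihIff]
    exact ⟨and_congr_right fun h => (hstep h).1, fun h => (hstep h.1).2 h.2⟩

end Steps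

theorem List.mem_take_ofFn {α : Type*} {n : ℕ} {f : Fin n → α} {k : ℕ} {a : α} :
    a ∈ (List.ofFn f).take k ↔ ∃ i : Fin n, (i : ℕ) < k ∧ a = f i := by
  simp only [List.mem_take_iff_getElem, Fin.exists_iff, List.getElem_ofFn, List.length_ofFn,
    lt_min_iff, eq_comm]
  exact ⟨fun ⟨j, ⟨hk, hn⟩, h⟩ => ⟨j, hn, hk, h⟩,
    fun ⟨j, hn, hk, h⟩ => ⟨j, ⟨hk, hn⟩, h⟩⟩

section Corollary

variable {A : Type*} [CommRing A] [StarRing A] {n m : ℕ} (μ : Fin n → A) (lam : Fin m → A)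

def stepsOfFn : List (A ⊕ A) := (List.ofFn μ).map Sum.inl ++ (List.ofFn lam).map Sum.inr

theorem star_eq_of_inl_mem_stepsOfFn (hμ : ∀ i, star (μ i) = μ i) (x : A)
    (hx : Sum.inl x ∈ stepsOfFn μ lam) : star x = x := by
  obtain ⟨i, rfl⟩ := by simpa [stepsOfFn] using hx
  exact hμ i

theorem flatMap_stepGens_stepsOfFn : (stepsOfFn μ lam).flatMap stepGens =
    List.ofFn μ ++ (List.ofFn fun j : Fin m => [lam j, star (lam j)]).flatten := by
  rw [stepsOfFn, List.flatMap_append, List.flatMap_map, List.flatMap_map]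
  congr 1
  · exact List.flatMap_singleton' _
  · rw [List.flatMap_def, List.map_ofFn]
    rfl

theorem map_stepClass_stepsOfFn : (stepsOfFn μ lam).map stepClass =
    List.ofFn μ ++ List.ofFn fun j : Fin m => lam j * star (lam j) := by
  simp only [stepClass, stepsOfFn, List.map_ofFn, List.map_append]
  rfl

theorem mem_flatMap_take_stepsOfFn (k : ℕ) (y : A) :
    y ∈ ((stepsOfFn μ lam).take k).flatMap stepGens ↔
      (∃ i : Fin n, (i : ℕ) < k ∧ y = μ i) ∨
      ∃ i : Fin m, n + i < k ∧ (y = lam i ∨ y = star (lam i)) := by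
  simp [stepsOfFn, List.take_append, List.mem_flatMap, stepGens, List.mem_take_ofFn,
    lt_tsub_iff_left]

theorem seqIdeal_take_stepsOfFn_of_le {k : ℕ} (hk : k ≤ n) :
    seqIdeal ((stepsOfFn μ lam).take k) =
      Ideal.span {a | ∃ i : Fin n, (i : ℕ) < k ∧ a = μ i} := by
  rw [seqIdeal]
  congr 1
  ext y
  simp only [Set.mem_ofPred_eq, mem_flatMap_take_stepsOfFn, or_iff_left_iff_imp]
  rintro ⟨i, hi, -⟩
  omega

theorem seqIdeal_take_add_stepsOfFn (j : ℕ) :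
    seqIdeal ((stepsOfFn μ lam).take (n + j)) =
      Ideal.span ({a | ∃ i : Fin n, a = μ i} ∪
        {a | ∃ i : Fin m, (i : ℕ) < j ∧ (a = lam i ∨ a = star (lam i))}) := by
  rw [seqIdeal]
  congr 1
  ext y
  simp only [Set.mem_ofPred_eq, Set.mem_union, mem_flatMap_take_stepsOfFn, add_lt_add_iff_left]
  congr! 3
  exact and_iff_right (by omega)

theorem seqIdeal_stepsOfFn :
    seqIdeal (stepsOfFn μ lam) =
      Ideal.span ({a | ∃ i : Fin n, a = μ i} ∪
        {a | ∃ i : Fin m, a = lam i ∨ a = star (lam i)}) := by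
  rw [← List.take_of_length_le (show (stepsOfFn μ lam).length ≤ n + m by simp [stepsOfFn]),
    seqIdeal_take_add_stepsOfFn]
  simp

theorem hMinusOnPrefixes_stepsOfFn_iff (hA : HMinusModZero (⊥ : Ideal A)) :
    HMinusOnPrefixes (stepsOfFn μ lam) ↔
      (∀ k : ℕ, 1 ≤ k → k ≤ n →
          HMinusModZero (Ideal.span {a : A | ∃ i : Fin n, (i : ℕ) < k ∧ a = μ i})) ∧
        ∀ j : ℕ, 1 ≤ j → j ≤ m →
          HMinusModZero (Ideal.span
            ({a : A | ∃ i : Fin n, a = μ i} ∪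
              {a : A | ∃ i : Fin m, (i : ℕ) < j ∧ (a = lam i ∨ a = star (lam i))})) := by
  have hlen : (stepsOfFn μ lam).length = n + m := by simp [stepsOfFn]
  rw [hMinusOnPrefixes_iff_forall_take, hlen]
  refine ⟨fun h => ⟨fun k _ hk => ?_, fun j _ hj => ?_⟩, fun ⟨h₁, h₂⟩ k hk => ?_⟩
  · simpa [seqIdeal_take_stepsOfFn_of_le μ lam hk] using h k (by omega)
  · simpa [seqIdeal_take_add_stepsOfFn μ lam j] using h (n + j) (by omega)
  obtain rfl | hk₀ := Nat.eq_zero_or_pos k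
  · simpa [seqIdeal] using hA
  obtain hkn | ⟨j, rfl⟩ := le_or_gt k n |>.imp_right Nat.exists_eq_add_of_lt
  · rw [seqIdeal_take_stepsOfFn_of_le μ lam hkn]
    exact h₁ k hk₀ hkn
  · rw [add_assoc, seqIdeal_take_add_stepsOfFn]
    exact h₂ (j + 1) (by omega) (by omega)

end Corollary

theorem stmt_2 {A : Type*} [CommRing A] [StarRing A]
    (hA : ∀ a : A, star a = -a → ∃ b : A, a = b - star b)
    (nn mm : ℕ) (μ : Fin nn → A) (lam : Fin mm → A)
    (hμ : ∀ i, star (μ i) = μ i)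
    (hreg : IsRegularSeq
      (List.ofFn μ ++ (List.ofFn fun j : Fin mm => [lam j, star (lam j)]).flatten)) :
    (IsHPlusRegularSeq
        (List.ofFn μ ++ List.ofFn fun j : Fin mm => lam j * star (lam j)) ↔
      ((∀ k : ℕ, 1 ≤ k → k ≤ nn →
          HMinusModZero (Ideal.span {a : A | ∃ i : Fin nn, (i : ℕ) < k ∧ a = μ i})) ∧
        (∀ j : ℕ, 1 ≤ j → j ≤ mm →
          HMinusModZero (Ideal.span
            ({a : A | ∃ i : Fin nn, a = μ i} ∪
              {a : A | ∃ i : Fin mm, (i : ℕ) < j ∧ (a = lam i ∨ a = star (lam i))}))))) ∧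
    (IsHPlusRegularSeq
        (List.ofFn μ ++ List.ofFn fun j : Fin mm => lam j * star (lam j)) →
      (HMinusModZero (Ideal.span
          ({a : A | ∃ i : Fin nn, a = μ i} ∪
            {a : A | ∃ i : Fin mm, a = lam i ∨ a = star (lam i)})) ∧
        (∀ a : A,
          star a - a ∈ Ideal.span
            ({a : A | ∃ i : Fin nn, a = μ i} ∪
              {a : A | ∃ i : Fin mm, a = lam i ∨ a = star (lam i)}) →
          ∃ x : A, star x = x ∧ ∃ b : A,
            a - x - (b + star b) ∈ Ideal.span
              ({a : A | ∃ i : Fin nn, a = μ i} ∪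
                {a : A | ∃ i : Fin mm, a = lam i ∨ a = star (lam i)})) ∧
        (∀ x : A, star x = x →
          (∃ b : A, x - (b + star b) ∈ Ideal.span
            ({a : A | ∃ i : Fin nn, a = μ i} ∪
              {a : A | ∃ i : Fin mm, a = lam i ∨ a = star (lam i)})) →
          hSpanMem (List.ofFn μ ++ List.ofFn fun j : Fin mm => lam j * star (lam j)) x))) := by
  have hbot : HMinusModZero (⊥ : Ideal A) := fun a ha =>
    (hA a (eq_neg_of_add_eq_zero_left (Ideal.mem_bot.mp ha))).imp fun b hb => by simp [hb]
  obtain ⟨hiff, hP⟩ := hMinusOnPrefixes_iff_and_presentsHPlus hbot (stepsOfFn μ lam)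
    (star_eq_of_inl_mem_stepsOfFn μ lam hμ) (by rwa [flatMap_stepGens_stepsOfFn])
  rw [map_stepClass_stepsOfFn, hMinusOnPrefixes_stepsOfFn_iff μ lam hbot] at hiff hP
  refine ⟨hiff.symm, fun h => ?_⟩
  obtain ⟨hHM, hlift, hker⟩ := hP (hiff.mpr h)
  rw [← seqIdeal_stepsOfFn]
  exact ⟨hHM, fun a ha => (hlift a ha).imp fun x ⟨hx, hax⟩ => ⟨hx, 0, by simpa using hax⟩,
    hker⟩
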